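/- arXiv:1402.5178 — 3 statements merged into one kernel-verified Lean document; each statement's English description precedes it below -/
import Mathlib

section
/- Real case (β = 1) of the congruence-transformation Jacobian. Let A be an invertible m×m real matrix and C an m×m real symmetric matrix, and let φ be the map on m×m real symmetric matrices given by φ(S) = A·S·Aᵀ + C. Then for every measurable set E of m×m real symmetric matrices, the Lebesgue measure of φ(E) equals |det A|^{m+1} times the Lebesgue measure of E. Equivalently, the linear endomorphism S ↦ A S Aᵀ of the space of m×m real symmetric matrices has determinant of absolute value |det A|^{m+1}. -/
open Matrix MeasureTheory ProbabilityTheory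
open scoped ENNReal NNReal Classical

noncomputable section

instance matrixMeasureSpace (n m : ℕ) : MeasureSpace (Matrix (Fin n) (Fin m) ℝ) :=
  inferInstanceAs (MeasureSpace (Fin n → Fin m → ℝ))

/-- Determinant of the `(i+1) × (i+1)` leading principal submatrix of `A`. -/
def lpdet {m : ℕ} (A : Matrix (Fin m) (Fin m) ℝ) (i : Fin m) : ℝ :=
  (A.submatrix (Fin.castLE i.isLt) (Fin.castLE i.isLt)).det

/-- The highest weight vector `q_κ(A) = det(A)^{k_m} ∏_{i<m} det(A_i)^{k_i - k_{i+1}}`. -/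
def qWeight {m : ℕ} (κ : Fin m → ℝ) (A : Matrix (Fin m) (Fin m) ℝ) : ℝ :=
  ∏ i : Fin m, lpdet A i ^ (κ i - if h : (i : ℕ) + 1 < m then κ ⟨(i : ℕ) + 1, h⟩ else 0)

/-- The generalised gamma function of weight `κ`:
`Γ_m[a, κ] = π^{m(m-1)/4} ∏_{i=1}^m Γ(a + k_i - (i-1)/2)`. -/
def gammaGen (m : ℕ) (a : ℝ) (κ : Fin m → ℝ) : ℝ :=
  Real.pi ^ ((m : ℝ) * ((m : ℝ) - 1) / 4) *
    ∏ i : Fin m, Real.Gamma (a + κ i - ((i : ℕ) : ℝ) / 2)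

/-- The generalised gamma function of weight `-κ`:
`Γ_m[a, -κ] = π^{m(m-1)/4} ∏_{i=1}^m Γ(a - k_i - (m-i)/2)`. -/
def gammaGenNeg (m : ℕ) (a : ℝ) (κ : Fin m → ℝ) : ℝ :=
  Real.pi ^ ((m : ℝ) * ((m : ℝ) - 1) / 4) *
    ∏ i : Fin m, Real.Gamma (a - κ i - ((m : ℝ) - 1 - ((i : ℕ) : ℝ)) / 2)

/-- The generalised c-beta function `B_m[a,κ; b,τ]`. -/
def betaC (m : ℕ) (a : ℝ) (κ : Fin m → ℝ) (b : ℝ) (τ : Fin m → ℝ) : ℝ :=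
  gammaGen m a κ * gammaGen m b τ / gammaGen m (a + b) (κ + τ)

/-- The generalised k-beta function `B_m[a,-κ; b,-τ]`. -/
def betaK (m : ℕ) (a : ℝ) (κ : Fin m → ℝ) (b : ℝ) (τ : Fin m → ℝ) : ℝ :=
  gammaGenNeg m a κ * gammaGenNeg m b τ / gammaGenNeg m (a + b) (κ + τ)

/-- The Cholesky factor `u(A)` of a positive definite matrix `A`: the unique upper
triangular matrix with positive diagonal entries such that `A = u(A)ᵀ * u(A)`
(junk value `1` if `A` is not positive definite). -/
def cholU {m : ℕ} (A : Matrix (Fin m) (Fin m) ℝ) : Matrix (Fin m) (Fin m) ℝ :=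
  haveI : WellFoundedLT (Fin m) := inferInstance
  if h : A.PosDef then
    Matrix.diagonal (fun i => Real.sqrt (LDL.diagEntries h i)) * (LDL.lower h)ᵀ
  else 1

/-- Assembling a symmetric matrix from its upper-triangular entries. -/
def symOfUpper {m : ℕ} (x : {p : Fin m × Fin m // p.1 ≤ p.2} → ℝ) :
    Matrix (Fin m) (Fin m) ℝ :=
  Matrix.of fun i j => if h : i ≤ j then x ⟨(i, j), h⟩ else x ⟨(j, i), le_of_not_ge h⟩

/-- Lebesgue measure on the space of `m × m` real symmetric matrices: the pushforward
of Lebesgue measure on `ℝ^{m(m+1)/2}` under the map assembling a symmetric matrix from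
its upper-triangular entries. -/
def symMeasure (m : ℕ) : Measure (Matrix (Fin m) (Fin m) ℝ) :=
  Measure.map symOfUpper volume

/-- The matricvariate Pearson type II-Riesz type I density with parameters `(ν, κ, τ)`. -/
def pearson1Density (n m : ℕ) (ν : ℝ) (κ τ : Fin m → ℝ)
    (R : Matrix (Fin n) (Fin m) ℝ) : ℝ :=
  if (Rᵀ * R).PosDef ∧ (1 - Rᵀ * R).PosDef then
    gammaGen m ((n : ℝ) / 2) 0 /
        (Real.pi ^ ((m : ℝ) * (n : ℝ) / 2) * betaC m (ν / 2) κ ((n : ℝ) / 2) τ) *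
      (1 - Rᵀ * R).det ^ ((ν - (m : ℝ) - 1) / 2) *
      qWeight κ (1 - Rᵀ * R) * qWeight τ (Rᵀ * R)
  else 0

/-- The matricvariate Pearson type II-Riesz type II density with parameters `(ν, κ, τ)`. -/
def pearson2Density (n m : ℕ) (ν : ℝ) (κ τ : Fin m → ℝ)
    (R : Matrix (Fin n) (Fin m) ℝ) : ℝ :=
  if (Rᵀ * R).PosDef ∧ (1 - Rᵀ * R).PosDef then
    gammaGen m ((n : ℝ) / 2) 0 /
        (Real.pi ^ ((m : ℝ) * (n : ℝ) / 2) * betaK m (ν / 2) κ ((n : ℝ) / 2) τ) *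
      (1 - Rᵀ * R).det ^ ((ν - (m : ℝ) - 1) / 2) *
      qWeight κ ((1 - Rᵀ * R)⁻¹) * qWeight τ ((Rᵀ * R)⁻¹)
  else 0

/-- The matricvariate T-Riesz type I density with parameters `(ν, κ, τ)`. -/
def tRiesz1Density (n m : ℕ) (ν : ℝ) (κ τ : Fin m → ℝ)
    (T : Matrix (Fin n) (Fin m) ℝ) : ℝ :=
  if (Tᵀ * T).PosDef then
    gammaGen m ((n : ℝ) / 2) 0 /
        (Real.pi ^ ((m : ℝ) * (n : ℝ) / 2) * betaC m (ν / 2) κ ((n : ℝ) / 2) τ) *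
      (1 + Tᵀ * T).det ^ (-(ν + (n : ℝ)) / 2) *
      qWeight (-κ - τ) (1 + Tᵀ * T) * qWeight τ (Tᵀ * T)
  else 0

/-- The matricvariate T-Riesz type II density with parameters `(ν, κ, τ)`. -/
def tRiesz2Density (n m : ℕ) (ν : ℝ) (κ τ : Fin m → ℝ)
    (T : Matrix (Fin n) (Fin m) ℝ) : ℝ :=
  if (Tᵀ * T).PosDef then
    gammaGen m ((n : ℝ) / 2) 0 /
        (Real.pi ^ ((m : ℝ) * (n : ℝ) / 2) * betaK m (ν / 2) κ ((n : ℝ) / 2) τ) *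
      (1 + Tᵀ * T).det ^ (-(ν + (n : ℝ)) / 2) *
      qWeight (-κ - τ) ((1 + Tᵀ * T)⁻¹) * qWeight τ ((Tᵀ * T)⁻¹)
  else 0

/-- The Riesz type I density with parameters `(a, κ)` and identity scale. -/
def riesz1Density (m : ℕ) (a : ℝ) (κ : Fin m → ℝ) (V : Matrix (Fin m) (Fin m) ℝ) : ℝ :=
  if V.PosDef then
    (1 / gammaGen m a κ) * Real.exp (-V.trace) * V.det ^ (a - ((m : ℝ) + 1) / 2) * qWeight κ V
  else 0

/-- The Riesz type II density with parameters `(a, κ)` and identity scale. -/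
def riesz2Density (m : ℕ) (a : ℝ) (κ : Fin m → ℝ) (V : Matrix (Fin m) (Fin m) ℝ) : ℝ :=
  if V.PosDef then
    (1 / gammaGenNeg m a κ) * Real.exp (-V.trace) * V.det ^ (a - ((m : ℝ) + 1) / 2) *
      qWeight κ (V⁻¹)
  else 0

/-- The Kotz-Riesz type I density with weight `τ` (zero location, identity scales). -/
def kotz1Density (n m : ℕ) (τ : Fin m → ℝ) (X : Matrix (Fin n) (Fin m) ℝ) : ℝ :=
  if (Xᵀ * X).PosDef then
    gammaGen m ((n : ℝ) / 2) 0 /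
        (Real.pi ^ ((m : ℝ) * (n : ℝ) / 2) * gammaGen m ((n : ℝ) / 2) τ) *
      Real.exp (-(Xᵀ * X).trace) * qWeight τ (Xᵀ * X)
  else 0

/-- The Kotz-Riesz type II density with weight `τ` (zero location, identity scales). -/
def kotz2Density (n m : ℕ) (τ : Fin m → ℝ) (X : Matrix (Fin n) (Fin m) ℝ) : ℝ :=
  if (Xᵀ * X).PosDef then
    gammaGen m ((n : ℝ) / 2) 0 /
        (Real.pi ^ ((m : ℝ) * (n : ℝ) / 2) * gammaGenNeg m ((n : ℝ) / 2) τ) *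
      Real.exp (-(Xᵀ * X).trace) * qWeight τ ((Xᵀ * X)⁻¹)
  else 0

/-- The matricvariate c-beta-Riesz type II density with parameters `(ν, n, κ, τ)`. -/
def cBetaIIDensity (m n : ℕ) (ν : ℝ) (κ τ : Fin m → ℝ) (F : Matrix (Fin m) (Fin m) ℝ) : ℝ :=
  if F.PosDef then
    (1 / betaC m (ν / 2) κ ((n : ℝ) / 2) τ) * F.det ^ (((n : ℝ) - (m : ℝ) - 1) / 2) *
      (1 + F).det ^ (-((n : ℝ) + ν) / 2) * qWeight (-κ - τ) (1 + F) * qWeight τ F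
  else 0

/-- The matricvariate k-beta-Riesz type II density with parameters `(ν, n, κ, τ)`. -/
def kBetaIIDensity (m n : ℕ) (ν : ℝ) (κ τ : Fin m → ℝ) (F : Matrix (Fin m) (Fin m) ℝ) : ℝ :=
  if F.PosDef then
    (1 / betaK m (ν / 2) κ ((n : ℝ) / 2) τ) * F.det ^ (((n : ℝ) - (m : ℝ) - 1) / 2) *
      (1 + F).det ^ (-((n : ℝ) + ν) / 2) * qWeight (-κ - τ) ((1 + F)⁻¹) * qWeight τ (F⁻¹)
  else 0

/-- The subspace of `m × m` real symmetric matrices. -/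
def symSubmodule (m : ℕ) : Submodule ℝ (Matrix (Fin m) (Fin m) ℝ) where
  carrier := {S | Sᵀ = S}
  add_mem' := fun {a} {b} ha hb => by
    simp only [Set.mem_setOf_eq] at *
    rw [Matrix.transpose_add, ha, hb]
  zero_mem' := by simp
  smul_mem' := fun c a ha => by
    simp only [Set.mem_setOf_eq] at *
    rw [Matrix.transpose_smul, ha]

/-- The congruence map `S ↦ A * S * Aᵀ` as a linear endomorphism of the space of
`m × m` real symmetric matrices. -/
def congrSymMap {m : ℕ} (A : Matrix (Fin m) (Fin m) ℝ) :
    symSubmodule m →ₗ[ℝ] symSubmodule m where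
  toFun S := ⟨A * S.1 * Aᵀ, by
    have hS : (S.1)ᵀ = S.1 := S.2
    show (A * S.1 * Aᵀ)ᵀ = A * S.1 * Aᵀ
    rw [Matrix.transpose_mul, Matrix.transpose_mul, Matrix.transpose_transpose, hS,
      Matrix.mul_assoc]⟩
  map_add' S T := by
    apply Subtype.ext
    show A * (S.1 + T.1) * Aᵀ = A * S.1 * Aᵀ + A * T.1 * Aᵀ
    rw [Matrix.mul_add, Matrix.add_mul]
  map_smul' c S := by
    apply Subtype.ext
    show A * (c • S.1) * Aᵀ = c • (A * S.1 * Aᵀ)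
    rw [Matrix.mul_smul, Matrix.smul_mul]

/-- The linear map `H ↦ -(S⁻¹ * H * S⁻¹)` on the space of `m × m` real symmetric
matrices (the Fréchet derivative of matrix inversion at `S`). -/
def invDerivSym {m : ℕ} (S : Matrix (Fin m) (Fin m) ℝ) (hS : Sᵀ = S) :
    symSubmodule m →ₗ[ℝ] symSubmodule m where
  toFun H := ⟨-(S⁻¹ * H.1 * S⁻¹), by
    have hH : (H.1)ᵀ = H.1 := H.2
    have hinv : (S⁻¹)ᵀ = S⁻¹ := by rw [Matrix.transpose_nonsing_inv, hS]
    show (-(S⁻¹ * H.1 * S⁻¹))ᵀ = -(S⁻¹ * H.1 * S⁻¹)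
    rw [Matrix.transpose_neg, Matrix.transpose_mul, Matrix.transpose_mul, hinv, hH,
      Matrix.mul_assoc]⟩
  map_add' H K := by
    apply Subtype.ext
    show -(S⁻¹ * (H.1 + K.1) * S⁻¹) = -(S⁻¹ * H.1 * S⁻¹) + -(S⁻¹ * K.1 * S⁻¹)
    rw [Matrix.mul_add, Matrix.add_mul, neg_add]
  map_smul' c H := by
    apply Subtype.ext
    show -(S⁻¹ * (c • H.1) * S⁻¹) = c • -(S⁻¹ * H.1 * S⁻¹)
    rw [Matrix.mul_smul, Matrix.smul_mul, smul_neg]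

/-!
Upper-triangular coordinates identify the symmetric matrices with `ℝ^{m(m+1)/2}` and carry
`symMeasure` to Lebesgue measure, so `S ↦ A S Aᵀ + C` scales `symMeasure` by the absolute
determinant of the linear map `S ↦ A S Aᵀ` on symmetric matrices; translation by the symmetric
matrix `C` does not change it. That determinant is multiplicative in `A`. For `A = diag d` it is
`∏_{i ≤ j} dᵢ dⱼ = (∏ dᵢ)^{m+1}`, and for a transvection `T` it has absolute value `1` because
`T⁻¹ = D T D` for a diagonal sign matrix `D`. Diagonal matrices and transvections generate all
matrices.
-/

abbrev UpperIndex (m : ℕ) := {p : Fin m × Fin m // p.1 ≤ p.2}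

lemma preimage_image_eq_image_preimage_of_semiconj {α β : Type*} {f : α → β} {g : α → α}
    {φ : β → β} (hf : Function.Injective f) (h : Function.Semiconj f g φ) {E : Set β}
    (hE : E ⊆ Set.range f) : f ⁻¹' (φ '' E) = g '' (f ⁻¹' E) := by
  rw [← Set.image_preimage_eq_of_subset hE, ← h.set_image, Set.preimage_image_eq _ hf,
    Set.preimage_image_eq _ hf]

lemma diagonal_sign_mul_transvection_mul_diagonal_sign {n R : Type*} [Fintype n]
    [DecidableEq n] [CommRing R] (t : TransvectionStruct n R) :
    diagonal (fun k => if k = t.i then -1 else 1) * t.toMatrix *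
      diagonal (fun k => if k = t.i then -1 else 1) = transvection t.i t.j (-t.c) := by
  ext a b
  have hij := t.hij
  by_cases ha : a = t.i <;> by_cases hb : b = t.i <;>
    simp [ha, hb, TransvectionStruct.toMatrix, transvection, one_apply, single_apply] <;>
    split_ifs <;> simp_all

lemma prod_upperIndex_mul {m : ℕ} {M : Type*} [CommMonoid M] (d : Fin m → M) :
    ∏ p : UpperIndex m, (d p.1.1 * d p.1.2) = (∏ i, d i) ^ (m + 1) := by
  set r := Finset.univ.filter fun p : Fin m × Fin m => p.1 ≤ p.2
  have hr : ∀ p, p ∈ r ↔ p.1 ∈ Finset.univ ∧ p.2 ∈ Finset.Ici p.1 := by simp [r]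
  have hr' : ∀ p, p ∈ r ↔ p.2 ∈ Finset.univ ∧ p.1 ∈ Finset.Iic p.2 := by simp [r]
  calc ∏ p : UpperIndex m, (d p.1.1 * d p.1.2)
      = (∏ p ∈ r, d p.1) * ∏ p ∈ r, d p.2 := by
        rw [← Finset.prod_mul_distrib,
          Finset.prod_subtype r (p := fun q => q.1 ≤ q.2) (by simp [r])]
    _ = (∏ i, d i ^ (m - i)) * ∏ j, d j ^ (j + 1 : ℕ) := by
        rw [Finset.prod_finset_product r _ _ hr, Finset.prod_finset_product_right r _ _ hr']
        simp [Fin.card_Ici, Fin.card_Iic]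
    _ = (∏ i, d i) ^ (m + 1) := by
        rw [← Finset.prod_mul_distrib, ← Finset.prod_pow]
        refine Finset.prod_congr rfl fun i _ => ?_
        rw [← pow_add]
        congr 1
        omega

section UpperCoordinates

variable {m : ℕ}

def upperCoords (S : Matrix (Fin m) (Fin m) ℝ) : UpperIndex m → ℝ := fun p => S p.1.1 p.1.2

lemma upperCoords_add (S T : Matrix (Fin m) (Fin m) ℝ) :
    upperCoords (S + T) = upperCoords S + upperCoords T := rfl

lemma upperCoords_symOfUpper (x : UpperIndex m → ℝ) : upperCoords (symOfUpper x) = x :=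
  funext fun p => dif_pos p.2

lemma symOfUpper_upperCoords {S : Matrix (Fin m) (Fin m) ℝ} (hS : Sᵀ = S) :
    symOfUpper (upperCoords S) = S := by
  ext i j
  by_cases h : i ≤ j
  · exact dif_pos h
  · exact (dif_neg h).trans (congr_fun (congr_fun hS i) j)

lemma symOfUpper_transpose (x : UpperIndex m → ℝ) : (symOfUpper x)ᵀ = symOfUpper x := by
  ext i j
  rcases lt_trichotomy i j with h | rfl | h
  · simp [symOfUpper, h.le, h.not_ge]
  · rfl
  · simp [symOfUpper, h.le, h.not_ge]

lemma range_symOfUpper :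
    Set.range (symOfUpper (m := m)) = {S : Matrix (Fin m) (Fin m) ℝ | Sᵀ = S} :=
  Set.ext fun S => ⟨by rintro ⟨x, rfl⟩; exact symOfUpper_transpose x,
    fun hS => ⟨upperCoords S, symOfUpper_upperCoords hS⟩⟩

lemma measurableSet_setOf_transpose_eq :
    MeasurableSet {S : Matrix (Fin m) (Fin m) ℝ | Sᵀ = S} := by
  have h : {S : Matrix (Fin m) (Fin m) ℝ | Sᵀ = S} = ⋂ i, ⋂ j, {S | S j i = S i j} := by
    ext S; simp [← Matrix.ext_iff]
  rw [h]
  exact .iInter fun i => .iInter fun j => measurableSet_eq_fun (by fun_prop) (by fun_prop)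

lemma measurableEmbedding_symOfUpper : MeasurableEmbedding (symOfUpper (m := m)) := by
  refine .of_measurable_inverse ?_ (range_symOfUpper ▸ measurableSet_setOf_transpose_eq)
    (by unfold upperCoords; fun_prop) upperCoords_symOfUpper
  refine measurable_pi_lambda _ fun i => measurable_pi_lambda _ fun j => ?_
  by_cases h : i ≤ j <;> simp only [symOfUpper, of_apply, h, dite_true, dite_false] <;>
    exact measurable_pi_apply _

lemma symMeasure_apply (s : Set (Matrix (Fin m) (Fin m) ℝ)) :
    symMeasure m s = volume (symOfUpper ⁻¹' s) :=
  measurableEmbedding_symOfUpper.map_apply _ _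

variable (m) in
def upperCoordsEquiv : symSubmodule m ≃ₗ[ℝ] (UpperIndex m → ℝ) where
  toFun S := upperCoords S.1
  map_add' _ _ := rfl
  map_smul' _ _ := rfl
  invFun x := ⟨symOfUpper x, symOfUpper_transpose x⟩
  left_inv S := Subtype.ext (symOfUpper_upperCoords S.2)
  right_inv := upperCoords_symOfUpper

end UpperCoordinates

section CongruenceDeterminant

variable {m : ℕ}

def congrUpperCoords (A : Matrix (Fin m) (Fin m) ℝ) :
    (UpperIndex m → ℝ) →ₗ[ℝ] (UpperIndex m → ℝ) :=
  (upperCoordsEquiv m : symSubmodule m →ₗ[ℝ] _) ∘ₗ congrSymMap A ∘ₗ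
    ((upperCoordsEquiv m).symm : _ →ₗ[ℝ] symSubmodule m)

lemma congrUpperCoords_apply (A : Matrix (Fin m) (Fin m) ℝ) (x : UpperIndex m → ℝ) :
    congrUpperCoords A x = upperCoords (A * symOfUpper x * Aᵀ) := rfl

lemma det_congrUpperCoords (A : Matrix (Fin m) (Fin m) ℝ) :
    LinearMap.det (congrUpperCoords A) = LinearMap.det (congrSymMap A) :=
  LinearMap.det_conj _ _

lemma congrSymMap_mul (A B : Matrix (Fin m) (Fin m) ℝ) :
    congrSymMap (A * B) = congrSymMap A ∘ₗ congrSymMap B := by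
  ext S : 2
  simp [congrSymMap, Matrix.transpose_mul, Matrix.mul_assoc]

lemma congrSymMap_one : congrSymMap (1 : Matrix (Fin m) (Fin m) ℝ) = LinearMap.id := by
  ext S : 2
  simp [congrSymMap]

lemma det_congrSymMap_diagonal (d : Fin m → ℝ) :
    LinearMap.det (congrSymMap (diagonal d)) = (∏ i, d i) ^ (m + 1) := by
  have hdiag : congrUpperCoords (diagonal d) =
      toLin' (diagonal fun p : UpperIndex m => d p.1.1 * d p.1.2) := by
    refine LinearMap.ext fun x => funext fun p => ?_
    change (diagonal d * symOfUpper x * (diagonal d)ᵀ) p.1.1 p.1.2 = _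
    rw [diagonal_transpose, mul_diagonal, diagonal_mul, toLin'_apply, mulVec_diagonal,
      mul_right_comm]
    exact congrArg _ (congr_fun (upperCoords_symOfUpper x) p)
  rw [← det_congrUpperCoords, hdiag, LinearMap.det_toLin', det_diagonal, prod_upperIndex_mul]

lemma abs_det_congrSymMap_transvection (t : TransvectionStruct (Fin m) ℝ) :
    |LinearMap.det (congrSymMap t.toMatrix)| = 1 := by
  set D : Matrix (Fin m) (Fin m) ℝ := diagonal fun k => if k = t.i then -1 else 1
  have hD : |LinearMap.det (congrSymMap D)| = 1 := by
    simp [D, det_congrSymMap_diagonal]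
  have hinv : t.toMatrix * transvection t.i t.j (-t.c) = 1 := by
    rw [TransvectionStruct.toMatrix, transvection_mul_transvection_same _ _ t.hij,
      add_neg_cancel, transvection_zero]
  have hprod : LinearMap.det (congrSymMap t.toMatrix) *
      LinearMap.det (congrSymMap (transvection t.i t.j (-t.c))) = 1 := by
    rw [← LinearMap.det_comp, ← congrSymMap_mul, hinv, congrSymMap_one, LinearMap.det_id]
  have habs : |LinearMap.det (congrSymMap (transvection t.i t.j (-t.c)))| =
      |LinearMap.det (congrSymMap t.toMatrix)| := by
    rw [← diagonal_sign_mul_transvection_mul_diagonal_sign, congrSymMap_mul, congrSymMap_mul,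
      LinearMap.det_comp, LinearMap.det_comp, abs_mul, abs_mul, hD, one_mul, mul_one]
  have hsq : |LinearMap.det (congrSymMap t.toMatrix)| ^ 2 = 1 := by
    have := congrArg abs hprod
    rwa [abs_mul, habs, ← sq, abs_one] at this
  exact (pow_eq_one_iff_of_nonneg (abs_nonneg _) two_ne_zero).1 hsq

lemma abs_det_congrSymMap (A : Matrix (Fin m) (Fin m) ℝ) :
    |LinearMap.det (congrSymMap A)| = |A.det| ^ (m + 1) := by
  induction A using diagonal_transvection_induction with
  | hdiag d _ => rw [det_congrSymMap_diagonal, det_diagonal, abs_pow]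
  | htransvec t => rw [abs_det_congrSymMap_transvection, t.det, abs_one, one_pow]
  | hmul A B hA hB =>
    rw [congrSymMap_mul, LinearMap.det_comp, abs_mul, hA, hB, det_mul, abs_mul, mul_pow]

end CongruenceDeterminant

section CongruenceMeasure

variable {m : ℕ}

lemma semiconj_symOfUpper_congrUpperCoords_add {A C : Matrix (Fin m) (Fin m) ℝ}
    (hC : Cᵀ = C) :
    Function.Semiconj symOfUpper (fun x => congrUpperCoords A x + upperCoords C)
      (fun S => A * S * Aᵀ + C) := fun x => by
  have hsymm : (A * symOfUpper x * Aᵀ)ᵀ = A * symOfUpper x * Aᵀ :=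
    (congrSymMap A ⟨symOfUpper x, symOfUpper_transpose x⟩).2
  dsimp only
  rw [congrUpperCoords_apply, ← upperCoords_add,
    symOfUpper_upperCoords (by rw [transpose_add, hsymm, hC])]

lemma symMeasure_image_congr_add {A C : Matrix (Fin m) (Fin m) ℝ} (hC : Cᵀ = C)
    {E : Set (Matrix (Fin m) (Fin m) ℝ)} (hE : ∀ S ∈ E, Sᵀ = S) :
    symMeasure m ((fun S => A * S * Aᵀ + C) '' E) =
      ENNReal.ofReal |LinearMap.det (congrSymMap A)| * symMeasure m E := by
  have hpre : symOfUpper ⁻¹' ((fun S => A * S * Aᵀ + C) '' E) =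
      (· + upperCoords C) '' (congrUpperCoords A '' (symOfUpper ⁻¹' E)) := by
    rw [Set.image_image]
    exact preimage_image_eq_image_preimage_of_semiconj measurableEmbedding_symOfUpper.injective
      (semiconj_symOfUpper_congrUpperCoords_add hC) (range_symOfUpper ▸ hE)
  rw [symMeasure_apply, symMeasure_apply, hpre, Set.image_add_right, measure_preimage_add_right,
    Measure.addHaar_image_linearMap, det_congrUpperCoords]

end CongruenceMeasure

theorem jacobian_congruence_transformation_general
    {m : ℕ} (A : Matrix (Fin m) (Fin m) ℝ)
    (C : Matrix (Fin m) (Fin m) ℝ) (hC : Cᵀ = C) :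
    (∀ E : Set (Matrix (Fin m) (Fin m) ℝ), MeasurableSet E → (∀ S ∈ E, Sᵀ = S) →
        symMeasure m ((fun S => A * S * Aᵀ + C) '' E) =
          ENNReal.ofReal (|A.det| ^ (m + 1)) * symMeasure m E) ∧
      |LinearMap.det (congrSymMap A)| = |A.det| ^ (m + 1) :=
  ⟨fun _ _ hE => by rw [symMeasure_image_congr_add hC hE, abs_det_congrSymMap],
    abs_det_congrSymMap A⟩

/-- Jacobian of the congruence transformation `S ↦ A * S * Aᵀ + C` on `m × m`
real symmetric matrices: it scales Lebesgue measure on symmetric matrices by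
`|det A|^(m+1)`; equivalently, the linear endomorphism `S ↦ A * S * Aᵀ` of the space of
symmetric matrices has determinant of absolute value `|det A|^(m+1)`. -/
theorem jacobian_congruence_transformation
    {m : ℕ} (A : Matrix (Fin m) (Fin m) ℝ) (hA : IsUnit A.det)
    (C : Matrix (Fin m) (Fin m) ℝ) (hC : Cᵀ = C) :
    (∀ E : Set (Matrix (Fin m) (Fin m) ℝ), MeasurableSet E → (∀ S ∈ E, Sᵀ = S) →
        symMeasure m ((fun S => A * S * Aᵀ + C) '' E) =
          ENNReal.ofReal (|A.det| ^ (m + 1)) * symMeasure m E) ∧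
      |LinearMap.det (congrSymMap A)| = |A.det| ^ (m + 1) :=
  jacobian_congruence_transformation_general A C hC

end
end

section
/- Real case (β = 1). Let m ≥ 1, let A be an m×m real positive definite matrix and let B be an m×m real upper triangular invertible matrix. Then BᵀAB and BᵀB are positive definite, and for every weight κ = (k_1,…,k_m) ∈ ℝ^m one has q_κ(BᵀAB) = q_κ(BᵀB) · q_κ(A). Consequently q_κ(B⁻ᵀ A B⁻¹) = q_κ(BᵀB)⁻¹ · q_κ(A). -/
open Matrix MeasureTheory ProbabilityTheory
open scoped ENNReal NNReal Classical

noncomputable section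

/-! For upper triangular `B` the first `k` columns of `B` vanish below row `k`, so the leading
`k × k` block of `Bᵀ A B` is `B_kᵀ A_k B_k`. Hence every leading minor satisfies
`det (Bᵀ A B)_k = det (Bᵀ B)_k · det A_k`, and `q_κ`, a product of real powers of leading
minors, inherits this multiplicativity as long as the minors of `A` are nonnegative. The formula
for `B⁻ᵀ A B⁻¹` is the same identity applied to `B⁻ᵀ A B⁻¹`, whose conjugate by `B` is `A`. -/

namespace Matrix

variable {ι κ l n l' n' R : Type*}

theorem submatrix_mul_of_injective [Fintype ι] [Fintype κ] [NonUnitalNonAssocSemiring R]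
    (M : Matrix l ι R) (N : Matrix ι n R) (e : l' → l) {f : κ → ι} (hf : Function.Injective f)
    (g : n' → n) (h : ∀ a b, ∀ i ∉ Set.range f, M (e a) i * N i (g b) = 0) :
    (M * N).submatrix e g = M.submatrix e f * N.submatrix f g := by
  ext a b
  exact (Fintype.sum_of_injective f hf _ _ (h a b) fun _ => rfl).symm

variable [LinearOrder ι] {B : Matrix ι ι R}

theorem BlockTriangular.apply_eq_zero_of_isLowerSet [Zero R] (hB : B.BlockTriangular id)
    {s : Set ι} (hs : IsLowerSet s) {i j : ι} (hi : i ∉ s) (hj : j ∈ s) : B i j = 0 :=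
  hB (lt_of_not_ge fun hij => hi (hs hij hj))

theorem BlockTriangular.submatrix_transpose_mul_mul [Fintype ι] [Fintype κ]
    [NonUnitalNonAssocSemiring R]
    (hB : B.BlockTriangular id) (A : Matrix ι ι R) {f : κ → ι} (hf : Function.Injective f)
    (hs : IsLowerSet (Set.range f)) :
    (Bᵀ * A * B).submatrix f f = (B.submatrix f f)ᵀ * A.submatrix f f * B.submatrix f f := by
  have hB0 : ∀ b, ∀ i ∉ Set.range f, B i (f b) = 0 := fun b i hi =>
    hB.apply_eq_zero_of_isLowerSet hs hi ⟨b, rfl⟩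
  rw [submatrix_mul_of_injective _ _ _ hf _ fun a b i hi => by rw [hB0 b i hi, mul_zero],
    submatrix_mul_of_injective _ _ _ hf _ fun a b i hi => by
      rw [transpose_apply, hB0 a i hi, zero_mul],
    transpose_submatrix]

end Matrix

theorem Fin.isLowerSet_range_castLE {k m : ℕ} (h : k ≤ m) :
    IsLowerSet (Set.range (Fin.castLE h)) := by
  rw [Fin.range_castLE]
  exact fun _ _ hba ha => lt_of_le_of_lt (Fin.le_def.mp hba) ha

section LeadingMinors

variable {m : ℕ}

theorem lpdet_transpose_mul_mul {B : Matrix (Fin m) (Fin m) ℝ} (hB : B.BlockTriangular id)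
    (A : Matrix (Fin m) (Fin m) ℝ) (i : Fin m) :
    lpdet (Bᵀ * A * B) i = lpdet B i ^ 2 * lpdet A i := by
  rw [lpdet, hB.submatrix_transpose_mul_mul A (Fin.castLE_injective _)
    (Fin.isLowerSet_range_castLE _), det_mul, det_mul, det_transpose, lpdet, lpdet]
  ring

theorem lpdet_transpose_mul_self {B : Matrix (Fin m) (Fin m) ℝ} (hB : B.BlockTriangular id)
    (i : Fin m) : lpdet (Bᵀ * B) i = lpdet B i ^ 2 := by
  simpa [lpdet, submatrix_one _ (Fin.castLE_injective _)] using
    lpdet_transpose_mul_mul hB 1 i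

theorem lpdet_nonneg {A : Matrix (Fin m) (Fin m) ℝ} (hA : A.PosSemidef) (i : Fin m) :
    0 ≤ lpdet A i :=
  (hA.submatrix _).det_nonneg

theorem lpdet_pos {A : Matrix (Fin m) (Fin m) ℝ} (hA : A.PosDef) (i : Fin m) :
    0 < lpdet A i :=
  (hA.submatrix (Fin.castLE_injective _)).det_pos

end LeadingMinors

section HighestWeightVector

variable {m : ℕ} (κ : Fin m → ℝ)

theorem qWeight_pos {A : Matrix (Fin m) (Fin m) ℝ} (hA : A.PosDef) : 0 < qWeight κ A :=
  Finset.prod_pos fun i _ => Real.rpow_pos_of_pos (lpdet_pos hA i) _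

theorem qWeight_eq_mul_of_lpdet_eq_mul {A C D : Matrix (Fin m) (Fin m) ℝ}
    (hC : ∀ i, 0 ≤ lpdet C i) (hD : ∀ i, 0 ≤ lpdet D i)
    (h : ∀ i, lpdet A i = lpdet C i * lpdet D i) :
    qWeight κ A = qWeight κ C * qWeight κ D := by
  simp only [qWeight, h, Real.mul_rpow (hC _) (hD _), Finset.prod_mul_distrib]

theorem qWeight_transpose_mul_mul {A B : Matrix (Fin m) (Fin m) ℝ} (hA : A.PosSemidef)
    (hB : B.BlockTriangular id) :
    qWeight κ (Bᵀ * A * B) = qWeight κ (Bᵀ * B) * qWeight κ A :=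
  qWeight_eq_mul_of_lpdet_eq_mul κ (fun i => lpdet_transpose_mul_self hB i ▸ sq_nonneg _)
    (lpdet_nonneg hA) fun i => by rw [lpdet_transpose_mul_mul hB, lpdet_transpose_mul_self hB]

end HighestWeightVector

theorem posDef_transpose_mul_mul {n : Type*} [Fintype n] [DecidableEq n]
    {A B : Matrix n n ℝ} (hA : A.PosDef)
    (hB : IsUnit B.det) : (Bᵀ * A * B).PosDef := by
  have hBinj : Function.Injective B.mulVec :=
    mulVec_injective_iff_isUnit.mpr ((isUnit_iff_isUnit_det B).mpr hB)
  simpa [conjTranspose_eq_transpose_of_trivial] using hA.conjTranspose_mul_mul_same hBinj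

theorem qWeight_triangular_congruence_general
    {m : ℕ} (A B : Matrix (Fin m) (Fin m) ℝ)
    (hA : A.PosDef) (hB : B.BlockTriangular id) (hBu : IsUnit B.det) :
    (Bᵀ * A * B).PosDef ∧ (Bᵀ * B).PosDef ∧
      ∀ κ : Fin m → ℝ,
        qWeight κ (Bᵀ * A * B) = qWeight κ (Bᵀ * B) * qWeight κ A ∧
        qWeight κ ((B⁻¹)ᵀ * A * B⁻¹) = (qWeight κ (Bᵀ * B))⁻¹ * qWeight κ A := by
  have hBtB : (Bᵀ * B).PosDef := by simpa using posDef_transpose_mul_mul PosDef.one hBu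
  refine ⟨posDef_transpose_mul_mul hA hBu, hBtB, fun κ =>
    ⟨qWeight_transpose_mul_mul κ hA.posSemidef hB, ?_⟩⟩
  set A' := (B⁻¹)ᵀ * A * B⁻¹
  have hA' : A'.PosDef := posDef_transpose_mul_mul hA (by simpa [det_nonsing_inv] using hBu)
  have hBA'B : Bᵀ * A' * B = A := by
    simp only [A', transpose_nonsing_inv, Matrix.mul_assoc, nonsing_inv_mul B hBu, mul_one]
    rw [← Matrix.mul_assoc, mul_nonsing_inv _ (by simpa using hBu), one_mul]
  rw [← hBA'B, qWeight_transpose_mul_mul κ hA'.posSemidef hB,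
    inv_mul_cancel_left₀ (qWeight_pos κ hBtB).ne']

/-- For `A` positive definite and `B` upper triangular invertible,
`BᵀAB` and `BᵀB` are positive definite and `q_κ(BᵀAB) = q_κ(BᵀB) q_κ(A)`; consequently
`q_κ(B⁻ᵀ A B⁻¹) = q_κ(BᵀB)⁻¹ q_κ(A)`. -/
theorem qWeight_triangular_congruence
    {m : ℕ} (hm : 1 ≤ m) (A B : Matrix (Fin m) (Fin m) ℝ)
    (hA : A.PosDef) (hB : B.BlockTriangular id) (hBu : IsUnit B.det) :
    (Bᵀ * A * B).PosDef ∧ (Bᵀ * B).PosDef ∧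
      ∀ κ : Fin m → ℝ,
        qWeight κ (Bᵀ * A * B) = qWeight κ (Bᵀ * B) * qWeight κ A ∧
        qWeight κ ((B⁻¹)ᵀ * A * B⁻¹) = (qWeight κ (Bᵀ * B))⁻¹ * qWeight κ A :=
  qWeight_triangular_congruence_general A B hA hB hBu

end
end

section
/- Let X be an n×m real matrix and U an m×m real positive definite matrix, so that U + XᵀX is positive definite. Set R := X · u(U + XᵀX)⁻¹. Then I_m − RᵀR is positive definite, its Cholesky factor is u(I_m − RᵀR) = u(U) · u(U + XᵀX)⁻¹ (which is upper triangular with positive diagonal entries), and consequently R · u(I_m − RᵀR)⁻¹ = X · u(U)⁻¹. -/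
open Matrix MeasureTheory ProbabilityTheory
open scoped ENNReal NNReal Classical

noncomputable section

/-! Write `B = u(U + XᵀX)` and `C = u(U)`. Since `BᵀB = CᵀC + XᵀX`, conjugating by `B⁻¹` gives
`I - RᵀR = (C B⁻¹)ᵀ (C B⁻¹)`. Upper triangular matrices with positive diagonal form a group, so
`C B⁻¹` belongs to it, and the Cholesky factorisation is unique (the only orthogonal matrix in this
group is `I`); hence `u(I - RᵀR) = C B⁻¹`, and `R (C B⁻¹)⁻¹ = X B⁻¹ B C⁻¹ = X C⁻¹`. -/

namespace Matrix

section Triangular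

variable {ι α R : Type*} [Fintype ι]

theorem BlockTriangular.mul_apply_self [LinearOrder α] [NonUnitalNonAssocSemiring R]
    {M N : Matrix ι ι R} {b : ι → α} (hM : M.BlockTriangular b) (hN : N.BlockTriangular b)
    (hb : Function.Injective b) (i : ι) : (M * N) i i = M i i * N i i := by
  rw [mul_apply]
  refine Fintype.sum_eq_single i fun k hk => ?_
  rcases lt_or_gt_of_ne (hb.ne hk) with h | h
  · rw [hM h, zero_mul]
  · rw [hN h, mul_zero]

theorem BlockTriangular.inv_apply_self [LinearOrder α] [DecidableEq ι] [Field R]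
    {M : Matrix ι ι R} {b : ι → α} (hM : M.BlockTriangular b) (hb : Function.Injective b)
    (hdet : IsUnit M.det) (i : ι) : M⁻¹ i i = (M i i)⁻¹ := by
  have := M.invertibleOfIsUnitDet hdet
  refine eq_inv_of_mul_eq_one_right ?_
  rw [← hM.mul_apply_self (blockTriangular_inv_of_blockTriangular hM) hb, mul_nonsing_inv _ hdet,
    one_apply_eq]

structure IsPosUpperTriangular [LinearOrder ι] [Zero R] [LT R] (M : Matrix ι ι R) : Prop where
  isUpperTriangular : M.IsUpperTriangular
  diag_pos : ∀ i, 0 < M i i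

namespace IsPosUpperTriangular

variable [LinearOrder ι] [Field R] [LinearOrder R] [IsStrictOrderedRing R] {S T : Matrix ι ι R}

theorem mul (hS : S.IsPosUpperTriangular) (hT : T.IsPosUpperTriangular) :
    (S * T).IsPosUpperTriangular where
  isUpperTriangular := hS.isUpperTriangular.mul hT.isUpperTriangular
  diag_pos i := by
    rw [hS.isUpperTriangular.mul_apply_self hT.isUpperTriangular Function.injective_id]
    exact mul_pos (hS.diag_pos i) (hT.diag_pos i)

variable [DecidableEq ι]

theorem isUnit_det (hT : T.IsPosUpperTriangular) : IsUnit T.det := by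
  rw [det_of_isUpperTriangular hT.isUpperTriangular]
  exact (Finset.prod_pos fun i _ => hT.diag_pos i).ne'.isUnit

theorem inv (hT : T.IsPosUpperTriangular) : T⁻¹.IsPosUpperTriangular where
  isUpperTriangular :=
    have := T.invertibleOfIsUnitDet hT.isUnit_det
    blockTriangular_inv_of_blockTriangular hT.isUpperTriangular
  diag_pos i := by
    rw [hT.isUpperTriangular.inv_apply_self Function.injective_id hT.isUnit_det]
    exact inv_pos.mpr (hT.diag_pos i)

/-- `Tᵀ = T⁻¹` is upper triangular, so `T` is diagonal, with diagonal entries `t = t⁻¹ > 0`. -/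
theorem eq_one_of_transpose_mul_self (hT : T.IsPosUpperTriangular) (hTT : Tᵀ * T = 1) :
    T = 1 := by
  have htr : Tᵀ = T⁻¹ := (inv_eq_left_inv hTT).symm
  ext i j
  rcases lt_trichotomy i j with h | rfl | h
  · rw [one_apply_ne h.ne, ← transpose_apply T j i, htr]
    exact hT.inv.isUpperTriangular h
  · have hii : T i i = (T i i)⁻¹ := by
      rw [← hT.isUpperTriangular.inv_apply_self Function.injective_id hT.isUnit_det, ← htr,
        transpose_apply]
    rw [one_apply_eq]
    nlinarith [hT.diag_pos i, mul_inv_cancel₀ (hT.diag_pos i).ne']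
  · rw [one_apply_ne h.ne', hT.isUpperTriangular h]

theorem eq_of_transpose_mul_self_eq (hS : S.IsPosUpperTriangular) (hT : T.IsPosUpperTriangular)
    (h : Sᵀ * S = Tᵀ * T) : S = T := by
  have hT₀ := hT.isUnit_det
  have hM : (S * T⁻¹)ᵀ * (S * T⁻¹) = 1 := by
    rw [transpose_mul, Matrix.mul_assoc, ← Matrix.mul_assoc Sᵀ, h, Matrix.mul_assoc,
      mul_nonsing_inv _ hT₀, Matrix.mul_one, ← transpose_mul, mul_nonsing_inv _ hT₀, transpose_one]
  have hST : S * T⁻¹ = 1 := (hS.mul hT.inv).eq_one_of_transpose_mul_self hM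
  exact (inv_eq_left_inv hST).symm.trans (nonsing_inv_nonsing_inv T hT₀)

end IsPosUpperTriangular

end Triangular

theorem one_sub_transpose_mul_self_mul_inv {ι κ R : Type*} [Fintype ι] [Fintype κ]
    [DecidableEq ι] [CommRing R] (X : Matrix κ ι R) {B C : Matrix ι ι R} (hB : IsUnit B.det)
    (h : Bᵀ * B = Cᵀ * C + Xᵀ * X) :
    1 - (X * B⁻¹)ᵀ * (X * B⁻¹) = (C * B⁻¹)ᵀ * (C * B⁻¹) := by
  have hnorm : (B⁻¹)ᵀ * (Bᵀ * B) * B⁻¹ = 1 := by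
    rw [← Matrix.mul_assoc, ← transpose_mul, mul_nonsing_inv _ hB, transpose_one, Matrix.one_mul,
      mul_nonsing_inv _ hB]
  calc 1 - (X * B⁻¹)ᵀ * (X * B⁻¹) = (B⁻¹)ᵀ * (Bᵀ * B - Xᵀ * X) * B⁻¹ := by
        rw [Matrix.mul_sub, Matrix.sub_mul, hnorm, transpose_mul]
        simp only [Matrix.mul_assoc]
    _ = (C * B⁻¹)ᵀ * (C * B⁻¹) := by
        rw [h, add_sub_cancel_right, transpose_mul]
        simp only [Matrix.mul_assoc]

theorem IsPosUpperTriangular.posDef_transpose_mul_self {ι : Type*} [Fintype ι] [LinearOrder ι]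
    {T : Matrix ι ι ℝ} (hT : T.IsPosUpperTriangular) : (Tᵀ * T).PosDef := by
  simpa only [conjTranspose_eq_transpose_of_trivial] using
    PosDef.conjTranspose_mul_self T
      (mulVec_injective_iff_isUnit.2 <| (isUnit_iff_isUnit_det T).2 hT.isUnit_det)

end Matrix

theorem InnerProductSpace.repr_gramSchmidt_self {𝕜 E ι : Type*} [RCLike 𝕜]
    [NormedAddCommGroup E] [InnerProductSpace 𝕜 E] [LinearOrder ι] [LocallyFiniteOrderBot ι]
    [WellFoundedLT ι] (b : Module.Basis ι 𝕜 E) (i : ι) : b.repr (gramSchmidt 𝕜 b i) i = 1 := by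
  have hproj : ∀ j ∈ Finset.Iio i,
      b.repr ((𝕜 ∙ gramSchmidt 𝕜 b j).starProjection (b i)) i = 0 := fun j hj => by
    rw [Submodule.starProjection_singleton, map_smul, Finsupp.smul_apply,
      gramSchmidt_triangular (Finset.mem_Iio.mp hj) b, smul_zero]
  rw [gramSchmidt_def 𝕜 b i, map_sub, map_sum, Finsupp.sub_apply, Finsupp.finsetSum_apply,
    Finset.sum_eq_zero hproj, Module.Basis.repr_self, Finsupp.single_eq_same, sub_zero]

namespace LDL

open scoped ComplexOrder

variable {𝕜 n : Type*} [RCLike 𝕜] [LinearOrder n] [WellFoundedLT n] [LocallyFiniteOrderBot n]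
  [Fintype n] {S : Matrix n n 𝕜} (hS : S.PosDef)

theorem lowerInv_apply_self (i : n) : lowerInv hS i i = 1 := by
  have := @InnerProductSpace.repr_gramSchmidt_self 𝕜 (n → 𝕜) n _
    (Sᵀ.toNormedAddCommGroup hS.transpose) (Sᵀ.toInnerProductSpace hS.transpose.posSemidef) _ _ _
    (Pi.basisFun 𝕜 n) i
  rwa [Pi.basisFun_repr] at this

theorem lowerInv_isLowerTriangular : (lowerInv hS).IsLowerTriangular :=
  fun _ _ hij => lowerInv_triangular hS hij

theorem lower_isLowerTriangular : (lower hS).IsLowerTriangular :=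
  Matrix.blockTriangular_inv_of_blockTriangular (lowerInv_isLowerTriangular hS)

theorem lower_apply_self (i : n) : lower hS i i = 1 := by
  rw [lower, (lowerInv_isLowerTriangular hS).inv_apply_self OrderDual.toDual.injective
    (Matrix.isUnit_det_of_invertible _), lowerInv_apply_self, inv_one]

theorem diagEntries_pos (i : n) : 0 < diagEntries hS i := by
  have hrow : star (lowerInv hS i) ≠ 0 := fun h => by
    simpa [lowerInv_apply_self] using congrFun h i
  simpa [diagEntries, EuclideanSpace.inner_toLp_toLp, dotProduct_comm] using
    hS.dotProduct_mulVec_pos hrow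

end LDL

section Cholesky

variable {m : ℕ} {A : Matrix (Fin m) (Fin m) ℝ}

theorem cholU_of_posDef (hA : A.PosDef) :
    cholU A = diagonal (fun i => √(LDL.diagEntries hA i)) * (LDL.lower hA)ᵀ :=
  dif_pos hA

theorem isPosUpperTriangular_cholU (hA : A.PosDef) : (cholU A).IsPosUpperTriangular where
  isUpperTriangular := by
    rw [cholU_of_posDef hA]
    exact (blockTriangular_diagonal _).mul fun _ _ h => LDL.lower_isLowerTriangular hA h
  diag_pos i := by
    rw [cholU_of_posDef hA, diagonal_mul, transpose_apply, LDL.lower_apply_self, mul_one]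
    exact Real.sqrt_pos.mpr (LDL.diagEntries_pos hA i)

theorem transpose_cholU_mul_cholU (hA : A.PosDef) : (cholU A)ᵀ * cholU A = A := by
  have hsqrt : diagonal (fun i => √(LDL.diagEntries hA i)) *
      diagonal (fun i => √(LDL.diagEntries hA i)) = LDL.diag hA := by
    rw [diagonal_mul_diagonal, LDL.diag]
    exact congrArg diagonal (funext fun i => Real.mul_self_sqrt (LDL.diagEntries_pos hA i).le)
  conv_rhs => rw [← LDL.lower_conj_diag hA, ← hsqrt, conjTranspose_eq_transpose_of_trivial]
  rw [cholU_of_posDef hA, transpose_mul, transpose_transpose, diagonal_transpose]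
  simp only [Matrix.mul_assoc]

theorem cholU_transpose_mul_self {T : Matrix (Fin m) (Fin m) ℝ} (hT : T.IsPosUpperTriangular) :
    cholU (Tᵀ * T) = T :=
  have hA := hT.posDef_transpose_mul_self
  (isPosUpperTriangular_cholU hA).eq_of_transpose_mul_self_eq hT (transpose_cholU_mul_cholU hA)

end Cholesky

/-- for `U` positive definite, `U + XᵀX` is positive definite, and with
`R = X * u(U + XᵀX)⁻¹` the matrix `I_m - RᵀR` is positive definite with Cholesky factor
`u(I_m - RᵀR) = u(U) * u(U + XᵀX)⁻¹` (upper triangular with positive diagonal), hence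
`R * u(I_m - RᵀR)⁻¹ = X * u(U)⁻¹`. -/
theorem pearson_key_identity
    {n m : ℕ} (X : Matrix (Fin n) (Fin m) ℝ) (U : Matrix (Fin m) (Fin m) ℝ)
    (hU : U.PosDef) :
    (U + Xᵀ * X).PosDef ∧
      (1 - (X * (cholU (U + Xᵀ * X))⁻¹)ᵀ * (X * (cholU (U + Xᵀ * X))⁻¹)).PosDef ∧
      (cholU U * (cholU (U + Xᵀ * X))⁻¹).BlockTriangular id ∧
      (∀ i : Fin m, 0 < (cholU U * (cholU (U + Xᵀ * X))⁻¹) i i) ∧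
      cholU (1 - (X * (cholU (U + Xᵀ * X))⁻¹)ᵀ * (X * (cholU (U + Xᵀ * X))⁻¹)) =
        cholU U * (cholU (U + Xᵀ * X))⁻¹ ∧
      (X * (cholU (U + Xᵀ * X))⁻¹) *
          (cholU (1 - (X * (cholU (U + Xᵀ * X))⁻¹)ᵀ * (X * (cholU (U + Xᵀ * X))⁻¹)))⁻¹ =
        X * (cholU U)⁻¹ := by
  have hV : (U + Xᵀ * X).PosDef := hU.add_posSemidef (by
    simpa only [conjTranspose_eq_transpose_of_trivial] using posSemidef_conjTranspose_mul_self X)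
  set B := cholU (U + Xᵀ * X)
  set C := cholU U
  have hB : B.IsPosUpperTriangular := isPosUpperTriangular_cholU hV
  have hW : (C * B⁻¹).IsPosUpperTriangular := (isPosUpperTriangular_cholU hU).mul hB.inv
  have hgram : 1 - (X * B⁻¹)ᵀ * (X * B⁻¹) = (C * B⁻¹)ᵀ * (C * B⁻¹) :=
    one_sub_transpose_mul_self_mul_inv X hB.isUnit_det
      (by rw [transpose_cholU_mul_cholU hV, transpose_cholU_mul_cholU hU])
  have hchol : cholU (1 - (X * B⁻¹)ᵀ * (X * B⁻¹)) = C * B⁻¹ := by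
    rw [hgram, cholU_transpose_mul_self hW]
  refine ⟨hV, hgram ▸ hW.posDef_transpose_mul_self, hW.isUpperTriangular, hW.diag_pos, hchol, ?_⟩
  rw [hchol, Matrix.mul_inv_rev, nonsing_inv_nonsing_inv _ hB.isUnit_det, Matrix.mul_assoc,
    ← Matrix.mul_assoc B⁻¹, nonsing_inv_mul _ hB.isUnit_det, Matrix.one_mul]

end
end
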